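/- Let α ∈ ℝ with α > −1 and set k = −(2α+1)/(α+1) (equivalently α = −(k+1)/(k+2)). Fix ℓ, λ ∈ ℂ, an integer m ≥ 0, and nonzero pairwise distinct complex numbers w_1,…,w_m; set z_j = (2α+2)²·w_j. Define V(z) = (1 − Σ_j k/w_j)/z + ℓ(ℓ+1)/z² + Σ_j 2/(z−w_j)² + Σ_j (k/w_j)/(z−w_j), and for real x > 0 set φ(x) = x^{2α+2}/(2α+2)², φ′(x) = x^{2α+1}/(2α+2). Then for every real x > 0 such that x^{2α+2} ≠ z_j for all j, one has ( V(φ(x)) + λ·φ(x)^k )·φ′(x)² − (1/2)·{φ,x}(x) = [ 4(α+1)²ℓ(ℓ+1) + α² + 2α + 3/4 ]/x² + x^{2α} + Σ_{j=1}^m [ −2(2α+2)(2α+1)·x^{2α}/(x^{2α+2}−z_j) + 2(2α+2)²·x^{4α+2}/(x^{2α+2}−z_j)² ] + (2α+2)^{2α/(α+1)}·λ, where {φ,x} = φ′′′/φ′ − (3/2)(φ′′/φ′)² is the Schwarzian derivative and all real powers of the positive reals x and 2α+2 are real powers (rpow); in particular (1/2){φ,x}(x) = −(α²+2α+3/4)/x².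 -/

import Mathlib

open Finset

/-- The potential `V(z)` of the `ŝl₂`-oper encoding a spectrum of the quantum KdV system:
`V(z) = (1 - Σ_j k/w_j)/z + ℓ(ℓ+1)/z² + Σ_j 2/(z-w_j)² + Σ_j (k/w_j)/(z-w_j)`. -/
noncomputable def Vpot (k : ℝ) (ℓ : ℂ) {m : ℕ} (w : Fin m → ℂ) (z : ℂ) : ℂ :=
  (1 - ∑ j, (k : ℂ) / w j) / z + ℓ * (ℓ + 1) / z ^ 2
    + ∑ j, 2 / (z - w j) ^ 2 + ∑ j, ((k : ℂ) / w j) / (z - w j)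

/-- `φ(x) = x^(2α+2)/(2α+2)²` (real power). -/
noncomputable def phiCh (α : ℝ) (x : ℝ) : ℝ := x ^ (2 * α + 2) / (2 * α + 2) ^ 2

/-- `φ′(x) = x^(2α+1)/(2α+2)` (real power). -/
noncomputable def phiCh' (α : ℝ) (x : ℝ) : ℝ := x ^ (2 * α + 1) / (2 * α + 2)

/-- The Schwarzian derivative `{φ,x} = φ′′′/φ′ - (3/2)(φ′′/φ′)²`, with `φ′′ = (φ′)′` and
`φ′′′ = (φ′)′′` computed from `φ′`. -/
noncomputable def schwarzian (α : ℝ) (x : ℝ) : ℝ :=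
  deriv (deriv (phiCh' α)) x / phiCh' α x
    - (3 / 2) * (deriv (phiCh' α) x / phiCh' α x) ^ 2

/-!
With `X = x^(2α+2)`, `Y = x^(2α)` and `a = (2α+2)²` one has `φ = X / a` and `φ′² = Y X / a`, so the
potential part becomes a rational identity in `X`, `Y`, `a` and the `w j`. By partial fractions
`(k / w j) / (φ - w j) · φ′² = k Y / w j + k a Y / (X - a w j)`, and the first summands cancel the
residue sum in the coefficient `1 - Σ k / w j` of `1 / z`. The value of `k` is exactly the one
making `φ^k φ′²` constant, and since `φ′` is the power `x^(p-1)` with `p = 2α + 2`, the Schwarzian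
is that of a power map, `(1 - p²) / (2x²)`.
-/

lemma hasDerivAt_phiCh (α : ℝ) {x : ℝ} (hx : x ≠ 0) : HasDerivAt (phiCh α) (phiCh' α x) x := by
  refine ((Real.hasDerivAt_rpow_const (p := 2 * α + 2) (Or.inl hx)).div_const
    ((2 * α + 2) ^ 2)).congr_deriv ?_
  rw [phiCh', show 2 * α + 2 - 1 = 2 * α + 1 by ring]
  rcases eq_or_ne (2 * α + 2) 0 with hc | hc
  · simp [hc]
  · field_simp

lemma hasDerivAt_phiCh' (α : ℝ) {x : ℝ} (hx : x ≠ 0) :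
    HasDerivAt (phiCh' α) ((2 * α + 1) * x ^ (2 * α) / (2 * α + 2)) x := by
  have h := (Real.hasDerivAt_rpow_const (p := 2 * α + 1) (Or.inl hx)).div_const (2 * α + 2)
  rwa [show 2 * α + 1 - 1 = 2 * α by ring] at h

lemma deriv_deriv_phiCh' (α : ℝ) {x : ℝ} (hx : x ≠ 0) :
    deriv (deriv (phiCh' α)) x = (2 * α + 1) * (2 * α * x ^ (2 * α - 1)) / (2 * α + 2) := by
  have hd : deriv (phiCh' α) =ᶠ[nhds x] fun y => (2 * α + 1) * y ^ (2 * α) / (2 * α + 2) := by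
    filter_upwards [eventually_ne_nhds hx] with y hy using (hasDerivAt_phiCh' α hy).deriv
  rw [hd.deriv_eq]
  exact (((Real.hasDerivAt_rpow_const (p := 2 * α) (Or.inl hx)).const_mul
    (2 * α + 1)).div_const (2 * α + 2)).deriv

lemma schwarzian_eq {α x : ℝ} (hα : 2 * α + 2 ≠ 0) (hx : 0 < x) :
    schwarzian α x = (1 - (2 * α + 2) ^ 2) / (2 * x ^ 2) := by
  have hα1 : α + 1 ≠ 0 := fun h => hα (by linear_combination 2 * h)
  have hpos : 0 < x ^ (2 * α - 1) := Real.rpow_pos_of_pos hx _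
  have h2α : x ^ (2 * α) = x ^ (2 * α - 1) * x := by
    rw [← Real.rpow_add_one hx.ne']; ring_nf
  have h2α1 : x ^ (2 * α + 1) = x ^ (2 * α - 1) * x * x := by
    rw [← Real.rpow_add_one hx.ne', ← Real.rpow_add_one hx.ne']; ring_nf
  rw [schwarzian, deriv_deriv_phiCh' α hx.ne', (hasDerivAt_phiCh' α hx.ne').deriv, phiCh', h2α,
    h2α1]
  field_simp
  ring

lemma phiCh'_sq (α : ℝ) {x : ℝ} (hx : 0 ≤ x) :
    phiCh' α x ^ 2 = x ^ (4 * α + 2) / (2 * α + 2) ^ 2 := by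
  rw [phiCh', div_pow, ← Real.rpow_natCast, ← Real.rpow_mul hx]
  norm_num
  ring_nf

lemma phiCh_rpow (α k : ℝ) {x : ℝ} (hα : 0 ≤ 2 * α + 2) (hx : 0 ≤ x) :
    phiCh α x ^ k = x ^ ((2 * α + 2) * k) / (2 * α + 2) ^ (2 * k) := by
  rw [phiCh, Real.div_rpow (by positivity) (by positivity), ← Real.rpow_natCast (2 * α + 2) 2,
    ← Real.rpow_mul hα, ← Real.rpow_mul hx]
  norm_num

lemma phiCh_rpow_mul_phiCh'_sq {α k x : ℝ} (hα : -1 < α) (hk : k = -(2 * α + 1) / (α + 1))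
    (hx : 0 < x) :
    phiCh α x ^ k * phiCh' α x ^ 2 = (2 * α + 2) ^ (2 * α / (α + 1)) := by
  have hc : 0 < 2 * α + 2 := by linarith
  have ha1 : α + 1 ≠ 0 := by linarith
  have hxk : (2 * α + 2) * k = -(4 * α + 2) := by rw [hk]; field_simp; ring
  have hck : 2 * k + ((2 : ℕ) : ℝ) = -(2 * α / (α + 1)) := by
    push_cast; rw [hk]; field_simp; ring
  rw [phiCh_rpow α k hc.le hx.le, phiCh'_sq α hx.le, hxk, div_mul_div_comm, ← Real.rpow_add hx,
    neg_add_cancel, Real.rpow_zero, ← Real.rpow_natCast (2 * α + 2) 2, ← Real.rpow_add hc, hck,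
    Real.rpow_neg hc.le, one_div, inv_inv]

lemma Vpot_div_mul {k : ℝ} {ℓ : ℂ} {m : ℕ} {w : Fin m → ℂ} (hw : ∀ j, w j ≠ 0) {a X Y : ℂ}
    (ha : a ≠ 0) (hX : X ≠ 0) (hXw : ∀ j, X - a * w j ≠ 0) :
    Vpot k ℓ w (X / a) * (Y * X / a)
      = Y + ℓ * (ℓ + 1) * (a * Y / X)
        + ∑ j, (k * a * Y / (X - a * w j) + 2 * a * (Y * X) / (X - a * w j) ^ 2) := by
  have hsub : ∀ j, X / a - w j = (X - a * w j) / a := fun j => by field_simp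
  have hres : (1 - ∑ j, (k : ℂ) / w j) / (X / a) * (Y * X / a) = Y - ∑ j, k / w j * Y := by
    rw [← sum_mul, ← one_sub_mul]
    field_simp
  have hcentre : ℓ * (ℓ + 1) / (X / a) ^ 2 * (Y * X / a) = ℓ * (ℓ + 1) * (a * Y / X) := by
    field_simp
  have hpole : ∀ j, (k / w j) / ((X - a * w j) / a) * (Y * X / a)
      = k / w j * Y + k * a * Y / (X - a * w j) := fun j => by
    have := hw j
    have : X - w j * a ≠ 0 := mul_comm a (w j) ▸ hXw j
    field_simp
    ring
  have hdouble : ∀ j, 2 / ((X - a * w j) / a) ^ 2 * (Y * X / a)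
      = 2 * a * (Y * X) / (X - a * w j) ^ 2 := fun j => by
    have := hXw j
    field_simp
  rw [Vpot]
  simp only [hsub]
  rw [add_mul, add_mul, add_mul, hres, hcentre, sum_mul, sum_mul]
  simp only [hpole, hdouble, sum_add_distrib]
  ring

lemma Vpot_phiCh_mul_phiCh'_sq {α k x : ℝ} (hα : α + 1 ≠ 0) (hk : k = -(2 * α + 1) / (α + 1))
    {ℓ : ℂ} {m : ℕ} {w : Fin m → ℂ} (hw : ∀ j, w j ≠ 0) (hx : 0 < x)
    (hxw : ∀ j, ((x ^ (2 * α + 2) : ℝ) : ℂ) ≠ (((2 * α + 2) ^ 2 : ℝ) : ℂ) * w j) :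
    Vpot k ℓ w ((phiCh α x : ℝ) : ℂ) * ((phiCh' α x : ℝ) : ℂ) ^ 2
      = ((x ^ (2 * α) : ℝ) : ℂ) + ℓ * (ℓ + 1) * (4 * ((α : ℂ) + 1) ^ 2 / (x : ℂ) ^ 2)
        + ∑ j, (-2 * (2 * (α : ℂ) + 2) * (2 * (α : ℂ) + 1) * ((x ^ (2 * α) : ℝ) : ℂ)
                  / (((x ^ (2 * α + 2) : ℝ) : ℂ) - (((2 * α + 2) ^ 2 : ℝ) : ℂ) * w j)
              + 2 * (((2 * α + 2) ^ 2 : ℝ) : ℂ) * ((x ^ (4 * α + 2) : ℝ) : ℂ)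
                  / (((x ^ (2 * α + 2) : ℝ) : ℂ) - (((2 * α + 2) ^ 2 : ℝ) : ℂ) * w j) ^ 2) := by
  set X : ℂ := ((x ^ (2 * α + 2) : ℝ) : ℂ)
  set Y : ℂ := ((x ^ (2 * α) : ℝ) : ℂ)
  set a : ℂ := (((2 * α + 2) ^ 2 : ℝ) : ℂ)
  have hX0 : X ≠ 0 := by simp only [X]; exact_mod_cast (Real.rpow_pos_of_pos hx _).ne'
  have hY : Y ≠ 0 := by simp only [Y]; exact_mod_cast (Real.rpow_pos_of_pos hx _).ne'
  have hX : X = (x : ℂ) ^ 2 * Y := by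
    simp only [X, Y, add_comm _ (2 : ℝ), Real.rpow_add hx, Real.rpow_two]; push_cast; rfl
  have hYX : Y * X = ((x ^ (4 * α + 2) : ℝ) : ℂ) := by
    rw [← Complex.ofReal_mul, ← Real.rpow_add hx]; ring_nf
  have hc : (2 * α + 2 : ℝ) ≠ 0 := fun h => hα (by linear_combination h / 2)
  have ha : a ≠ 0 := by simp only [a]; exact_mod_cast pow_ne_zero 2 hc
  have hφ : ((phiCh α x : ℝ) : ℂ) = X / a := by simp only [phiCh, X, a]; push_cast; rfl
  have hφ' : ((phiCh' α x : ℝ) : ℂ) ^ 2 = Y * X / a := by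
    rw [← Complex.ofReal_pow, phiCh'_sq α hx.le, hYX, Complex.ofReal_div]
  have hka : (k : ℂ) * a = -2 * (2 * (α : ℂ) + 2) * (2 * (α : ℂ) + 1) := by
    simp only [a, hk]; push_cast; field_simp
  have haYX : a * Y / X = 4 * ((α : ℂ) + 1) ^ 2 / (x : ℂ) ^ 2 := by
    have : (x : ℂ) ≠ 0 := by exact_mod_cast hx.ne'
    rw [hX]; simp only [a]; push_cast; field_simp; ring
  rw [hφ, hφ', Vpot_div_mul hw ha hX0 (fun j => sub_ne_zero.mpr (hxw j)), hka, haYX, hYX]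

theorem kdv_change_of_variables (α : ℝ) (hα : -1 < α) (k : ℝ)
    (hk : k = -(2 * α + 1) / (α + 1))
    (ℓ lam : ℂ) (m : ℕ) (w : Fin m → ℂ) (hw : ∀ j, w j ≠ 0) :
    ∀ x : ℝ, 0 < x → (∀ j, ((x ^ (2 * α + 2) : ℝ) : ℂ) ≠ (((2 * α + 2) ^ 2 : ℝ) : ℂ) * w j) →
      -- φ′ is indeed the derivative of φ
      HasDerivAt (phiCh α) (phiCh' α x) x ∧
      -- the transformed potential
      (Vpot k ℓ w ((phiCh α x : ℝ) : ℂ) + lam * ((phiCh α x ^ k : ℝ) : ℂ))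
          * ((phiCh' α x : ℝ) : ℂ) ^ 2 - (1 / 2) * ((schwarzian α x : ℝ) : ℂ)
        = (4 * ((α : ℂ) + 1) ^ 2 * ℓ * (ℓ + 1) + (α : ℂ) ^ 2 + 2 * (α : ℂ) + 3 / 4)
              / (x : ℂ) ^ 2
          + ((x ^ (2 * α) : ℝ) : ℂ)
          + ∑ j, (-2 * (2 * (α : ℂ) + 2) * (2 * (α : ℂ) + 1) * ((x ^ (2 * α) : ℝ) : ℂ)
                    / (((x ^ (2 * α + 2) : ℝ) : ℂ) - (((2 * α + 2) ^ 2 : ℝ) : ℂ) * w j)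
                + 2 * (((2 * α + 2) ^ 2 : ℝ) : ℂ) * ((x ^ (4 * α + 2) : ℝ) : ℂ)
                    / (((x ^ (2 * α + 2) : ℝ) : ℂ) - (((2 * α + 2) ^ 2 : ℝ) : ℂ) * w j) ^ 2)
          + (((2 * α + 2) ^ (2 * α / (α + 1)) : ℝ) : ℂ) * lam ∧
      -- the explicit value of (1/2){φ,x}
      (1 / 2) * schwarzian α x = -(α ^ 2 + 2 * α + 3 / 4) / x ^ 2 := by
  intro x hx hxw
  have hc : 2 * α + 2 ≠ 0 := by linarith
  have hsch : (1 / 2) * schwarzian α x = -(α ^ 2 + 2 * α + 3 / 4) / x ^ 2 := by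
    rw [schwarzian_eq hc hx]; field_simp; ring
  have hsch' : (1 / 2 : ℂ) * ((schwarzian α x : ℝ) : ℂ)
      = -((α : ℂ) ^ 2 + 2 * α + 3 / 4) / (x : ℂ) ^ 2 := by
    have h := congrArg ((↑) : ℝ → ℂ) hsch
    push_cast at h
    exact h
  have hlam : lam * ((phiCh α x ^ k : ℝ) : ℂ) * ((phiCh' α x : ℝ) : ℂ) ^ 2
      = (((2 * α + 2) ^ (2 * α / (α + 1)) : ℝ) : ℂ) * lam := by
    rw [mul_assoc, ← Complex.ofReal_pow, ← Complex.ofReal_mul,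
      phiCh_rpow_mul_phiCh'_sq hα hk hx, mul_comm]
  refine ⟨hasDerivAt_phiCh α hx.ne', ?_, hsch⟩
  rw [add_mul, hlam, Vpot_phiCh_mul_phiCh'_sq (by linarith) hk hw hx hxw, hsch']
  ring
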